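/- arXiv:2507.18372 — 2 statements merged into one kernel-verified Lean document; each statement's English description precedes it below -/
import Mathlib

section
/- Let Θ ⊆ ℝ^d, let X = {x_1,...,x_N} and Z = {z_1,...,z_M} be finite datasets with weights w ∈ ℝ^M, and let l(θ,x) > 0 be a smooth likelihood. Define the unnormalized score difference s(θ) = Σ_{n=1}^N ∇_θ log l(θ, x_n) − Σ_{m=1}^M w_m ∇_θ log l(θ, z_m). Then for any probability measure π on Θ, (1/2) ∫_Θ ‖s(θ)‖² dπ(θ) = (1/2) MMD_k(P_X, P_{w,Z})², where k(x,x') = ∫_Θ ⟨∇_θ log l(θ,x), ∇_θ log l(θ,x')⟩ dπ(θ), P_X = Σ_n δ_{x_n}, P_{w,Z} = Σ_m w_m δ_{z_m}, and MMD_k(P,Q)² = E_{P×P}[k] + E_{Q×Q}[k] − 2E_{P×Q}[k]. -/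
open MeasureTheory

/-- Fisher-divergence / MMD equivalence for Bayesian posteriors.
The score difference `s θ = Σ_n ∇log l(θ,x_n) − Σ_m w_m ∇log l(θ,z_m)` satisfies
`(1/2)∫‖s‖² dπ = (1/2) MMD_k(P_X, P_{w,Z})²` with
`k(a,b) = ∫ ⟨∇log l(θ,a), ∇log l(θ,b)⟩ dπ(θ)`. -/
theorem stmt0 {d : ℕ} {𝒳 : Type*} (N M : ℕ) (x : Fin N → 𝒳) (z : Fin M → 𝒳)
    (w : Fin M → ℝ) (l : EuclideanSpace ℝ (Fin d) → 𝒳 → ℝ)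
    (hpos : ∀ θ a, 0 < l θ a)
    (hsmooth : ∀ a, ContDiff ℝ (⊤ : ℕ∞) (fun θ => l θ a))
    (π : Measure (EuclideanSpace ℝ (Fin d))) [IsProbabilityMeasure π]
    (g : 𝒳 → EuclideanSpace ℝ (Fin d) → EuclideanSpace ℝ (Fin d))
    (hg : ∀ a θ, g a θ = gradient (fun θ' => Real.log (l θ' a)) θ)
    (k : 𝒳 → 𝒳 → ℝ)
    (hk : ∀ a b, k a b = ∫ θ, (inner ℝ (g a θ) (g b θ) : ℝ) ∂π)
    (hint : ∀ a b, Integrable (fun θ => (inner ℝ (g a θ) (g b θ) : ℝ)) π) :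
    (1/2) * ∫ θ, ‖(∑ n, g (x n) θ) - ∑ m, w m • g (z m) θ‖^2 ∂π
      = (1/2) * ((∑ n, ∑ n', k (x n) (x n'))
        + (∑ m, ∑ m', w m * w m' * k (z m) (z m'))
        - 2 * ∑ n, ∑ m, w m * k (x n) (z m)) := by
  set S1 : EuclideanSpace ℝ (Fin d) → ℝ :=
    fun θ => ∑ n, ∑ n', (inner ℝ (g (x n) θ) (g (x n') θ) : ℝ) with hS1
  set S2 : EuclideanSpace ℝ (Fin d) → ℝ :=
    fun θ => ∑ m, ∑ m', w m * w m' * (inner ℝ (g (z m) θ) (g (z m') θ) : ℝ) with hS2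
  set S3 : EuclideanSpace ℝ (Fin d) → ℝ :=
    fun θ => ∑ n, ∑ m, w m * (inner ℝ (g (x n) θ) (g (z m) θ) : ℝ) with hS3
  have hI1 : Integrable S1 π :=
    integrable_finset_sum _ fun n _ => integrable_finset_sum _ fun n' _ => hint _ _
  have hI2 : Integrable S2 π :=
    integrable_finset_sum _ fun m _ => integrable_finset_sum _ fun m' _ => ((hint _ _).const_mul _)
  have hI3 : Integrable S3 π :=
    integrable_finset_sum _ fun n _ => integrable_finset_sum _ fun m _ => ((hint _ _).const_mul _)
  have hI12 : Integrable (fun θ => S1 θ + S2 θ) π := hI1.add hI2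
  have hI3' : Integrable (fun θ => 2 * S3 θ) π := hI3.const_mul 2
  have hpt : ∀ θ, ‖(∑ n, g (x n) θ) - ∑ m, w m • g (z m) θ‖^2
      = S1 θ + S2 θ - 2 * S3 θ := by
    intro θ
    have hAA : (inner ℝ (∑ n, g (x n) θ) (∑ n', g (x n') θ) : ℝ) = S1 θ := by
      rw [sum_inner]
      exact Finset.sum_congr rfl fun n _ => by rw [inner_sum]
    have hBB : (inner ℝ (∑ m, w m • g (z m) θ) (∑ m', w m' • g (z m') θ) : ℝ) = S2 θ := by
      rw [sum_inner]
      exact Finset.sum_congr rfl fun m _ => by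
        rw [inner_sum]
        exact Finset.sum_congr rfl fun m' _ => by
          rw [real_inner_smul_left, real_inner_smul_right]; ring
    have hAB : (inner ℝ (∑ n, g (x n) θ) (∑ m, w m • g (z m) θ) : ℝ) = S3 θ := by
      rw [sum_inner]
      exact Finset.sum_congr rfl fun n _ => by
        rw [inner_sum]
        exact Finset.sum_congr rfl fun m _ => by rw [real_inner_smul_right]
    have hBA : (inner ℝ (∑ m, w m • g (z m) θ) (∑ n, g (x n) θ) : ℝ) = S3 θ := by
      rw [real_inner_comm]; exact hAB
    rw [← real_inner_self_eq_norm_sq, inner_sub_sub_self, hAA, hBB, hAB]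
    rw [show (inner ℝ (∑ m, w m • g (z m) θ) (∑ n, g (x n) θ) : ℝ) = S3 θ from hBA]
    ring
  rw [integral_congr_ae (Filter.Eventually.of_forall hpt), integral_sub hI12 hI3',
    integral_add hI1 hI2, integral_const_mul]
  have e1 : ∫ θ, S1 θ ∂π = ∑ n, ∑ n', k (x n) (x n') := by
    rw [hS1, integral_finset_sum _ (fun n _ => integrable_finset_sum _ fun n' _ => hint _ _)]
    exact Finset.sum_congr rfl fun n _ => by
      rw [integral_finset_sum _ (fun n' _ => hint _ _)]
      exact Finset.sum_congr rfl fun n' _ => (hk _ _).symm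
  have e2 : ∫ θ, S2 θ ∂π = ∑ m, ∑ m', w m * w m' * k (z m) (z m') := by
    rw [hS2, integral_finset_sum _
      (fun m _ => integrable_finset_sum _ fun m' _ => (hint _ _).const_mul _)]
    exact Finset.sum_congr rfl fun m _ => by
      rw [integral_finset_sum _ (fun m' _ => (hint _ _).const_mul _)]
      exact Finset.sum_congr rfl fun m' _ => by rw [integral_const_mul, hk]
  have e3 : ∫ θ, S3 θ ∂π = ∑ n, ∑ m, w m * k (x n) (z m) := by
    rw [hS3, integral_finset_sum _
      (fun n _ => integrable_finset_sum _ fun m _ => (hint _ _).const_mul _)]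
    exact Finset.sum_congr rfl fun n _ => by
      rw [integral_finset_sum _ (fun m _ => (hint _ _).const_mul _)]
      exact Finset.sum_congr rfl fun m _ => by rw [integral_const_mul, hk]
  rw [e1, e2, e3]
end

section
/- Suppose for all β ∈ ℝ^p and all σ > 0: Σ_{n=1}^N [(⟨β,x_n⟩−y_n)²/σ³ − 1/σ] = Σ_{m=1}^M w_m[(⟨β,z_m⟩−u_m)²/σ³ − 1/σ] and Σ_{n=1}^N (x_n(⟨β,x_n⟩−y_n))/σ² = Σ_{m=1}^M w_m (z_m(⟨β,z_m⟩−u_m))/σ². Then Σ_n x_n x_n^⊤ = Σ_m w_m z_m z_m^⊤, Σ_n x_n y_n = Σ_m w_m z_m u_m, Σ_n y_n² = Σ_m w_m u_m², and N = Σ_m w_m provided the first component of every x_n and z_m equals 1. -/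
/-- Lemma 4 of the paper: vanishing of the Bayesian linear
regression score difference (both `β` and `σ` components) for all `β` and all
`σ > 0` implies equality of the sufficient statistics; if moreover all first
coordinates equal 1 then `N = Σ w_m`. -/
theorem stmt15 {p : ℕ} (hp : 0 < p) (N M : ℕ)
    (x : Fin N → EuclideanSpace ℝ (Fin p)) (y : Fin N → ℝ)
    (z : Fin M → EuclideanSpace ℝ (Fin p)) (u : Fin M → ℝ) (w : Fin M → ℝ)
    (hσeq : ∀ (β : EuclideanSpace ℝ (Fin p)) (σ : ℝ), 0 < σ →
      (∑ n, (((inner ℝ β (x n) : ℝ) - y n)^2 / σ^3 - 1/σ))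
        = ∑ m, w m * (((inner ℝ β (z m) : ℝ) - u m)^2 / σ^3 - 1/σ))
    (hβeq : ∀ (β : EuclideanSpace ℝ (Fin p)) (σ : ℝ), 0 < σ →
      (∑ n, (σ^2)⁻¹ • ((((inner ℝ β (x n) : ℝ)) - y n) • x n))
        = ∑ m, w m • ((σ^2)⁻¹ • ((((inner ℝ β (z m) : ℝ)) - u m) • z m))) :
    (∀ i j : Fin p, (∑ n, x n i * x n j) = ∑ m, w m * (z m i * z m j)) ∧
    ((∑ n, y n • x n) = ∑ m, (w m * u m) • z m) ∧
    ((∑ n, (y n)^2) = ∑ m, w m * (u m)^2) ∧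
    ((∀ n, x n ⟨0, hp⟩ = 1) → (∀ m, z m ⟨0, hp⟩ = 1) →
      (N : ℝ) = ∑ m, w m) := by
  have hb : ∀ β : EuclideanSpace ℝ (Fin p),
      (∑ n, (((inner ℝ β (x n) : ℝ)) - y n) • x n)
        = ∑ m, w m • ((((inner ℝ β (z m) : ℝ)) - u m) • z m) := by
    intro β
    have h := hβeq β 1 one_pos
    simpa using h
  have hb0 := hb 0
  simp only [inner_zero_left, zero_sub, neg_smul] at hb0
  have hc2 : (∑ n, y n • x n) = ∑ m, (w m * u m) • z m := by
    have h : -(∑ n, y n • x n) = -∑ m, (w m * u m) • z m := by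
      rw [← Finset.sum_neg_distrib, ← Finset.sum_neg_distrib, hb0]
      refine Finset.sum_congr rfl fun m _ => ?_
      rw [smul_neg, smul_smul]
    exact neg_injective h
  have hlin : ∀ β : EuclideanSpace ℝ (Fin p),
      (∑ n, ((inner ℝ β (x n) : ℝ)) • x n)
        = ∑ m, w m • (((inner ℝ β (z m) : ℝ)) • z m) := by
    intro β
    have h := hb β
    simp only [sub_smul, smul_sub, Finset.sum_sub_distrib] at h
    have h2 : (∑ m, w m • ((u m : ℝ) • z m)) = ∑ m, (w m * u m) • z m :=
      Finset.sum_congr rfl fun m _ => by rw [smul_smul]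
    rw [h2, ← hc2] at h
    exact sub_left_inj.mp h
  have hc1 : ∀ i j : Fin p, (∑ n, x n i * x n j) = ∑ m, w m * (z m i * z m j) := by
    intro i j
    have h := hlin (EuclideanSpace.single j (1 : ℝ))
    simp only [EuclideanSpace.inner_single_left, map_one, one_mul] at h
    have h' := congrArg (fun v : EuclideanSpace ℝ (Fin p) => (inner ℝ v (EuclideanSpace.single i (1:ℝ)) : ℝ)) h
    simpa [sum_inner, real_inner_smul_left, EuclideanSpace.inner_single_right,
      mul_comm, mul_assoc, mul_left_comm] using h'
  -- σ part
  have hE : ∀ σ : ℝ, 0 < σ →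
      (∑ n, (y n)^2) - σ^2 * N = (∑ m, w m * (u m)^2) - σ^2 * ∑ m, w m := by
    intro σ hσ
    have h := hσeq 0 σ hσ
    simp only [inner_zero_left, zero_sub, neg_sq] at h
    have hl : (∑ n, ((y n)^2 / σ^3 - 1/σ)) = (∑ n, (y n)^2)/σ^3 - N/σ := by
      rw [Finset.sum_sub_distrib, ← Finset.sum_div, Finset.sum_const, Finset.card_univ,
        Fintype.card_fin, nsmul_eq_mul]
      ring
    have hσ3 : σ^3 ≠ 0 := by positivity
    have hσ0 : σ ≠ 0 := ne_of_gt hσ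
    have hr : (∑ m, w m * ((u m)^2 / σ^3 - 1/σ))
        = (∑ m, w m * (u m)^2)/σ^3 - (∑ m, w m)/σ := by
      rw [Finset.sum_div, Finset.sum_div, ← Finset.sum_sub_distrib]
      refine Finset.sum_congr rfl fun m _ => ?_
      field_simp
    rw [hl, hr] at h
    field_simp at h
    nlinarith [h]
  have h1 := hE 1 one_pos
  have h2 := hE 2 two_pos
  have hc3 : (∑ n, (y n)^2) = ∑ m, w m * (u m)^2 := by nlinarith [h1, h2]
  have hc4 : (N : ℝ) = ∑ m, w m := by nlinarith [h1, h2]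
  exact ⟨hc1, hc2, hc3, fun _ _ => hc4⟩
end
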